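/- For positive semidefinite diagonal matrices Σ̃₂² ∈ ℂ^{k×k} and Σ₁² ∈ ℂ^{(n−k)×(n−k)} with ‖Σ̃₂²‖₂ ≤ α² and σ_min(Σ₁²) ≥ (α+δ)², the map X ↦ Σ̃₂² X − X Σ₁² on ℂ^{k×(n−k)} is a bijection, and if Σ̃₂² X − X Σ₁² = Σ̃₂ E Σ₁ then ‖X‖_F ≤ ‖E‖_F / χ(α², (α+δ)²). -/

import Mathlib

open Matrix BigOperators

/-- Frobenius norm of a complex matrix. -/
noncomputable def frob {p q : Type*} [Fintype p] [Fintype q] (A : Matrix p q ℂ) : ℝ :=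
  Real.sqrt (∑ i, ∑ j, ‖A i j‖ ^ 2)

/-- Euclidean (ℓ₂) norm of a complex vector. -/
noncomputable def enorm₂ {q : Type*} [Fintype q] (x : q → ℂ) : ℝ :=
  Real.sqrt (∑ i, ‖x i‖ ^ 2)

/-- Spectral norm (operator 2-norm) of a complex matrix. -/
noncomputable def specNorm {p q : Type*} [Fintype p] [Fintype q] (A : Matrix p q ℂ) : ℝ :=
  sSup {r : ℝ | ∃ x : q → ℂ, enorm₂ x ≤ 1 ∧ r = enorm₂ (A.mulVec x)}

/-- The relative gap function χ(a,b) = |a−b|/√(ab). -/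
noncomputable def chi (a b : ℝ) : ℝ := |a - b| / Real.sqrt (a * b)

/-- Diagonal special case of Li's Sylvester-equation lemma:
X ↦ Σ̃₂² X − X Σ₁² is a bijection, and Σ̃₂² X − X Σ₁² = Σ̃₂ E Σ₁ implies
‖X‖_F ≤ ‖E‖_F / χ(α², (α+δ)²). -/
theorem stmt17 {k nk : ℕ} (σt : Fin k → ℝ) (σ : Fin nk → ℝ) (α δ : ℝ)
    (hα : 0 < α) (hδ : 0 < δ)
    (hσt : ∀ j, 0 ≤ σt j ∧ σt j ≤ α) (hσ : ∀ i, α + δ ≤ σ i) :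
    Function.Bijective (fun X : Matrix (Fin k) (Fin nk) ℂ =>
      Matrix.diagonal (fun j => (σt j : ℂ) ^ 2) * X - X * Matrix.diagonal (fun i => (σ i : ℂ) ^ 2))
    ∧ ∀ X E : Matrix (Fin k) (Fin nk) ℂ,
        Matrix.diagonal (fun j => (σt j : ℂ) ^ 2) * X - X * Matrix.diagonal (fun i => (σ i : ℂ) ^ 2)
          = Matrix.diagonal (fun j => (σt j : ℂ)) * E * Matrix.diagonal (fun i => (σ i : ℂ)) →
        frob X ≤ frob E / chi (α ^ 2) ((α + δ) ^ 2) := by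
  have hb : 0 < α + δ := by linarith
  have hlt : ∀ (i : Fin k) (j : Fin nk), (σt i) ^ 2 < (σ j) ^ 2 := by
    intro i j
    have h1 := (hσt i).1; have h2 := (hσt i).2; have h3 := hσ j
    nlinarith
  have hne : ∀ (i : Fin k) (j : Fin nk), ((σt i : ℂ) ^ 2 - (σ j : ℂ) ^ 2) ≠ 0 := by
    intro i j
    have : ((σt i : ℂ) ^ 2) ≠ ((σ j : ℂ) ^ 2) := by
      have := (hlt i j).ne
      exact_mod_cast fun h => this (by exact_mod_cast h)
    exact sub_ne_zero.mpr this
  have happly : ∀ (X : Matrix (Fin k) (Fin nk) ℂ) (i : Fin k) (j : Fin nk),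
      (Matrix.diagonal (fun j => (σt j : ℂ) ^ 2) * X
        - X * Matrix.diagonal (fun i => (σ i : ℂ) ^ 2)) i j
      = ((σt i : ℂ) ^ 2 - (σ j : ℂ) ^ 2) * X i j := by
    intro X i j
    simp [Matrix.sub_apply, Matrix.diagonal_mul, Matrix.mul_diagonal]
    ring
  constructor
  · -- Bijective: explicit inverse
    refine Function.bijective_iff_has_inverse.mpr ⟨fun Y => Matrix.of fun i j =>
      Y i j / ((σt i : ℂ) ^ 2 - (σ j : ℂ) ^ 2), ?_, ?_⟩
    · intro X
      ext i j
      simp only [Matrix.of_apply, happly]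
      exact mul_div_cancel_left₀ _ (hne i j)
    · intro Y
      ext i j
      simp only [happly, Matrix.of_apply]
      rw [mul_comm, div_mul_cancel₀ _ (hne i j)]
  · intro X E hEq
    -- entrywise bound
    set C : ℝ := α * (α + δ) / ((α + δ) ^ 2 - α ^ 2) with hC
    have hden : (0 : ℝ) < (α + δ) ^ 2 - α ^ 2 := by nlinarith
    have hCpos : 0 < C := by
      apply div_pos (by positivity) hden
    have hentry : ∀ (i : Fin k) (j : Fin nk), ‖X i j‖ ≤ C * ‖E i j‖ := by
      intro i j
      have h := congrFun (congrFun hEq i) j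
      rw [happly] at h
      have hRHS : (Matrix.diagonal (fun j => (σt j : ℂ)) * E
          * Matrix.diagonal (fun i => (σ i : ℂ))) i j = (σt i : ℂ) * E i j * (σ j : ℂ) := by
        simp [Matrix.mul_diagonal, Matrix.diagonal_mul]
      rw [hRHS] at h
      have hX : X i j = ((σt i : ℂ) * (σ j : ℂ) / ((σt i : ℂ) ^ 2 - (σ j : ℂ) ^ 2)) * E i j := by
        rw [div_mul_eq_mul_div, eq_div_iff (hne i j)]
        linear_combination h
      rw [hX, norm_mul]
      gcongr
      have hcast : ((σt i : ℂ) * (σ j : ℂ) / ((σt i : ℂ) ^ 2 - (σ j : ℂ) ^ 2))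
          = ((σt i * σ j / ((σt i) ^ 2 - (σ j) ^ 2) : ℝ) : ℂ) := by push_cast; ring
      rw [hcast, Complex.norm_real, Real.norm_eq_abs]
      rw [abs_div, abs_of_nonneg (mul_nonneg (hσt i).1 (hb.le.trans (hσ j))),
        abs_of_neg (by linarith [hlt i j])]
      rw [div_le_div_iff₀ (by linarith [hlt i j]) hden]
      have h1 := (hσt i).1; have h2 := (hσt i).2; have h3 := hσ j
      have key : (α * σ j - σt i * (α + δ)) * (σ j * (α + δ) + σt i * α) ≥ 0 := by
        apply mul_nonneg
        · nlinarith
        · nlinarith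
      nlinarith [key]
    -- sum the squares
    have hsum : (∑ i, ∑ j, ‖X i j‖ ^ 2) ≤ C ^ 2 * (∑ i, ∑ j, ‖E i j‖ ^ 2) := by
      rw [Finset.mul_sum]
      apply Finset.sum_le_sum
      intro i _
      rw [Finset.mul_sum]
      apply Finset.sum_le_sum
      intro j _
      have := hentry i j
      nlinarith [norm_nonneg (X i j), norm_nonneg (E i j)]
    have hfrob : frob X ≤ C * frob E := by
      rw [frob, frob]
      have : C * Real.sqrt (∑ i, ∑ j, ‖E i j‖ ^ 2)
          = Real.sqrt (C ^ 2 * (∑ i, ∑ j, ‖E i j‖ ^ 2)) := by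
        rw [Real.sqrt_mul (by positivity), Real.sqrt_sq hCpos.le]
      rw [this]
      exact Real.sqrt_le_sqrt hsum
    have hchi : chi (α ^ 2) ((α + δ) ^ 2) = ((α + δ) ^ 2 - α ^ 2) / (α * (α + δ)) := by
      rw [chi, abs_of_neg (by nlinarith)]
      congr 1
      · ring
      · rw [show α ^ 2 * (α + δ) ^ 2 = (α * (α + δ)) ^ 2 by ring,
          Real.sqrt_sq (by positivity)]
    rw [hchi, div_div_eq_mul_div]
    calc frob X ≤ C * frob E := hfrob
      _ = frob E * (α * (α + δ)) / ((α + δ) ^ 2 - α ^ 2) := by rw [hC]; ring
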